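/- arXiv:2103.16305 — 2 statements merged into one kernel-verified Lean document; each statement's English description precedes it below -/
import Mathlib

section
/- Let E : {(n,k) ∈ ℕ² : 1 ≤ k ≤ n} → ℝ be a family of nonnegative real numbers, non-decreasing in k for each fixed n, let C > 0 and F ≥ 0 be constants such that E(n,k) ≤ C·(E(n,k+1) − E(n,k) + F·(k+1)) for all 1 ≤ k ≤ n−1, and E(n,n) ≤ C·F·n for all n ≥ 1. Then there exist a constant C₀ > 0 and an index k₀ ≥ 1, both depending only on C (not on F or n), such that for all k, n with k₀ ≤ k ≤ n one has E(n,k) ≤ C₀·F·k. -/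
/-- Descending induction lemma: from `E n k ≤ C (E n (k+1) - E n k + F (k+1))` and
`E n n ≤ C F n`, deduce `E n k ≤ C₀ F k` for `k₀ ≤ k ≤ n`, with `C₀, k₀` depending
only on `C` (hence the quantification over `E` and `F` inside the existential). -/
theorem descending_induction_energy (C : ℝ) (hC : 0 < C) :
    ∃ C₀ : ℝ, 0 < C₀ ∧ ∃ k₀ : ℕ, 1 ≤ k₀ ∧
      ∀ (E : ℕ → ℕ → ℝ) (F : ℝ), 0 ≤ F →
        (∀ n k : ℕ, 1 ≤ k → k ≤ n → 0 ≤ E n k) →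
        (∀ n k l : ℕ, 1 ≤ k → k ≤ l → l ≤ n → E n k ≤ E n l) →
        (∀ n k : ℕ, 1 ≤ k → k + 1 ≤ n →
          E n k ≤ C * (E n (k + 1) - E n k + F * (k + 1))) →
        (∀ n : ℕ, 1 ≤ n → E n n ≤ C * F * n) →
        ∀ k n : ℕ, k₀ ≤ k → k ≤ n → E n k ≤ C₀ * F * k := by
  refine ⟨3 * C + 1, by linarith, ⌈2 * C⌉₊ + 1, by omega, ?_⟩
  intro E F hF hpos hmono hrec hbase k n hk hkn
  obtain ⟨m, rfl⟩ : ∃ m, n = k + m := ⟨n - k, by omega⟩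
  clear hkn
  induction m generalizing k with
  | zero =>
    have h := hbase k (by omega)
    have hkn : (0:ℝ) ≤ (k:ℝ) := Nat.cast_nonneg k
    simp only [Nat.add_zero]
    nlinarith [mul_nonneg hF hkn]
  | succ m ih =>
    have hk2C : (2 * C : ℝ) ≤ (k:ℝ) := by
      have h1 : (2 * C : ℝ) ≤ (⌈2 * C⌉₊ : ℝ) := Nat.le_ceil _
      have h2 : ((⌈2 * C⌉₊ : ℕ) : ℝ) ≤ (k:ℝ) := by
        exact_mod_cast (by omega : ⌈2 * C⌉₊ ≤ k)
      linarith
    have hih := ih (k + 1) (by omega)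
    have heq : k + 1 + m = k + (m + 1) := by omega
    rw [heq] at hih
    push_cast at hih
    have hrec' := hrec (k + (m + 1)) k (by omega) (by omega)
    push_cast at hrec'
    have hEnn : 0 ≤ E (k + (m + 1)) k := hpos _ _ (by omega) (by omega)
    -- (1+C) * E n k ≤ C*(3C+2)*F*(k+1)
    have hCy := mul_le_mul_of_nonneg_left hih hC.le
    have h1 : (1 + C) * E (k + (m + 1)) k ≤ C * (3 * C + 2) * (F * ((k:ℝ) + 1)) := by
      nlinarith [hrec', hCy]
    have h2 : F * ((k:ℝ) + 1) * (2 * C) ≤ F * (k:ℝ) * (2 * C + 1) := by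
      nlinarith [mul_nonneg hF (sub_nonneg.mpr hk2C)]
    have hFk : (0:ℝ) ≤ F * (k:ℝ) := mul_nonneg hF (Nat.cast_nonneg k)
    have h3 := mul_le_mul_of_nonneg_left h1 (by positivity : (0:ℝ) ≤ 2 * C)
    have h4 := mul_le_mul_of_nonneg_left h2 (by positivity : (0:ℝ) ≤ C * (3 * C + 2))
    nlinarith [h3, h4, mul_nonneg (mul_nonneg hC.le hC.le) hFk]
end

section
/- Let Ω = ℝ × (0,1) with unit slices U_k = (k,k+1) × (0,1) and triple slices U_k* = (k−1, k+2) × (0,1), and let Ω_n = (−n, n) × (0,1). There exists C > 0 independent of n such that for every f ∈ H^{−1}_uloc(Ω), ‖f‖_{H^{−1}(Ω_n)} ≤ C n^{1/2} ‖f‖_{H^{−1}_uloc}, where ‖f‖_{H^{−1}_uloc} := sup_{k∈ℤ} ‖χ_k f‖_{H^{−1}(Ω)} for a standard partition-of-unity family of cutoffs χ_k with Σ_k χ_k = 2. -/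
open Set MeasureTheory
open scoped ENNReal

/-- The `H¹` norm (on the whole plane) of a test function. -/
noncomputable def h1Norm (φ : ℝ × ℝ → ℝ) : ℝ≥0∞ :=
  eLpNorm φ 2 volume + eLpNorm (fun x => fderiv ℝ φ x) 2 volume

/-- The `H^{−1}(U)` norm of `f`, defined by duality against smooth test functions
compactly supported in `U` with `H¹` norm at most `1`. -/
noncomputable def negH1NormOn (U : Set (ℝ × ℝ)) (f : ℝ × ℝ → ℝ) : ℝ≥0∞ :=
  sSup { r : ℝ≥0∞ | ∃ φ : ℝ × ℝ → ℝ, ContDiff ℝ (⊤ : ℕ∞) φ ∧ HasCompactSupport φ ∧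
    tsupport φ ⊆ U ∧ h1Norm φ ≤ 1 ∧ r = ENNReal.ofReal (∫ x, f x * φ x) }

/-- The strip `Ω = ℝ × (0,1)`. -/
def stripSet : Set (ℝ × ℝ) := Set.univ ×ˢ Set.Ioo (0:ℝ) 1

/-- The truncated strip `Ω_n = (−n, n) × (0,1)`. -/
def stripTrunc (n : ℕ) : Set (ℝ × ℝ) := Set.Ioo (-(n : ℝ)) (n : ℝ) ×ˢ Set.Ioo (0:ℝ) 1

lemma rpow_two_eq (x : ℝ≥0∞) : x ^ (2:ℝ) = x ^ (2:ℕ) := by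
  rw [← ENNReal.rpow_natCast x 2]; norm_num

lemma h1Norm_lt_top {φ : ℝ × ℝ → ℝ} (hφ : ContDiff ℝ (⊤ : ℕ∞) φ) (hc : HasCompactSupport φ) :
    h1Norm φ < ⊤ := by
  have h1 : MemLp φ 2 volume := hφ.continuous.memLp_of_hasCompactSupport hc
  have h2 : MemLp (fun x => fderiv ℝ φ x) 2 volume :=
    ((hφ.fderiv_right (m := (⊤ : ℕ∞)) (by simp)).continuous).memLp_of_hasCompactSupport (hc.fderiv (𝕜 := ℝ))
  exact ENNReal.add_lt_top.2 ⟨h1.2, h2.2⟩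

lemma sq_eLpNorm_two {E : Type*} [NormedAddCommGroup E] (g : ℝ × ℝ → E) :
    eLpNorm g 2 volume ^ 2 = ∫⁻ x, (‖g x‖₊ : ℝ≥0∞) ^ 2 ∂volume := by
  rw [eLpNorm_eq_lintegral_rpow_enorm_toReal (by norm_num) (by norm_num)]
  have h2 : (2 : ℝ≥0∞).toReal = 2 := by norm_num
  rw [h2, ← rpow_two_eq, ← ENNReal.rpow_mul]
  rw [show (1/2 * 2 : ℝ) = 1 by norm_num, ENNReal.rpow_one]
  congr 1; funext x; rw [rpow_two_eq, enorm_eq_nnnorm]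

lemma ennreal_add_sq_le (a b : ℝ≥0∞) : (a + b) ^ 2 ≤ 4 * (a ^ 2 + b ^ 2) := by
  rcases le_total a b with h | h
  · calc (a + b) ^ 2 ≤ (b + b) ^ 2 := pow_le_pow_left' (add_le_add_left h b) 2
      _ = 4 * b ^ 2 := by ring
      _ ≤ 4 * (a ^ 2 + b ^ 2) := mul_le_mul' le_rfl le_add_self
  · calc (a + b) ^ 2 ≤ (a + a) ^ 2 := pow_le_pow_left' (add_le_add_right h a) 2
      _ = 4 * a ^ 2 := by ring
      _ ≤ 4 * (a ^ 2 + b ^ 2) := mul_le_mul' le_rfl le_self_add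

lemma pairing_le {U : Set (ℝ × ℝ)} {f φ : ℝ × ℝ → ℝ}
    (hφ1 : ContDiff ℝ (⊤ : ℕ∞) φ) (hφ2 : HasCompactSupport φ) (hφ3 : tsupport φ ⊆ U)
    (hfin : negH1NormOn U f ≠ ⊤) :
    ∫ x, f x * φ x ≤ (h1Norm φ).toReal * (negH1NormOn U f).toReal := by
  have ha_fin : h1Norm φ ≠ ⊤ := (h1Norm_lt_top hφ1 hφ2).ne
  by_cases ha0 : h1Norm φ = 0
  · have hz : eLpNorm φ 2 volume = 0 := (add_eq_zero.1 ha0).1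
    have hφ0 : φ =ᵐ[volume] 0 :=
      (eLpNorm_eq_zero_iff hφ1.continuous.aestronglyMeasurable (by norm_num)).1 hz
    have : (fun x => f x * φ x) =ᵐ[volume] (fun _ => (0:ℝ)) := by
      filter_upwards [hφ0] with x hx
      simp [hx]
    rw [integral_congr_ae this]
    simp [mul_nonneg ENNReal.toReal_nonneg ENNReal.toReal_nonneg]
  · set a := h1Norm φ with ha_def
    have hapos : 0 < a.toReal := ENNReal.toReal_pos ha0 ha_fin
    set c := (a.toReal)⁻¹ with hc_def
    have hcpos : 0 < c := inv_pos.2 hapos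
    set ψ := fun x => c * φ x with hψ_def
    have hψsmul : ψ = c • φ := rfl
    have hder : ∀ x, fderiv ℝ ψ x = c • fderiv ℝ φ x := fun x =>
      fderiv_const_mul (hφ1.differentiable (by simp) x) c
    have hψ1 : h1Norm ψ ≤ 1 := by
      have e1 : eLpNorm ψ 2 volume = ‖c‖₊ • eLpNorm φ 2 volume := by
        rw [hψsmul]; exact eLpNorm_const_smul c φ 2 volume
      have e2 : eLpNorm (fun x => fderiv ℝ ψ x) 2 volume
          = ‖c‖₊ • eLpNorm (fun x => fderiv ℝ φ x) 2 volume := by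
        have : (fun x => fderiv ℝ ψ x) = c • (fun x => fderiv ℝ φ x) := by
          funext x; exact hder x
        rw [this, ENNReal.smul_def, smul_eq_mul, ← enorm_eq_nnnorm]
        exact eLpNorm_const_smul (𝕜 := ℝ) (F := (ℝ × ℝ) →L[ℝ] ℝ) c (fun x => fderiv ℝ φ x) 2 volume
      have : h1Norm ψ = (‖c‖₊ : ℝ≥0∞) * a := by
        rw [h1Norm, e1, e2, ha_def, h1Norm, mul_add]
        simp [ENNReal.smul_def, smul_eq_mul]
      rw [this, ← enorm_eq_nnnorm, Real.enorm_eq_ofReal hcpos.le]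
      rw [← ENNReal.ofReal_toReal ha_fin, ← ENNReal.ofReal_mul hcpos.le]
      rw [hc_def, inv_mul_cancel₀ hapos.ne']
      simp
    have hmem : ENNReal.ofReal (∫ x, f x * ψ x) ∈
        { r : ℝ≥0∞ | ∃ φ : ℝ × ℝ → ℝ, ContDiff ℝ (⊤ : ℕ∞) φ ∧ HasCompactSupport φ ∧
          tsupport φ ⊆ U ∧ h1Norm φ ≤ 1 ∧ r = ENNReal.ofReal (∫ x, f x * φ x) } := by
      refine ⟨ψ, contDiff_const.mul hφ1, ?_, ?_, hψ1, rfl⟩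
      · rw [hψsmul]; exact hφ2.smul_left
      · refine subset_trans (closure_mono ?_) hφ3
        intro x hx
        simp only [Function.mem_support, hψ_def] at hx ⊢
        exact fun h => hx (by rw [h, mul_zero])
    have hle : ENNReal.ofReal (∫ x, f x * ψ x) ≤ negH1NormOn U f := le_sSup hmem
    have key : ∫ x, f x * ψ x ≤ (negH1NormOn U f).toReal := by
      rcases le_or_gt (∫ x, f x * ψ x) 0 with h | h
      · exact h.trans ENNReal.toReal_nonneg
      · have h2 := ENNReal.toReal_mono hfin hle
        rwa [ENNReal.toReal_ofReal h.le] at h2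
    have hint : ∫ x, f x * ψ x = c * ∫ x, f x * φ x := by
      rw [← integral_const_mul]
      congr 1; funext x; ring
    have : ∫ x, f x * φ x = a.toReal * ∫ x, f x * ψ x := by
      rw [hint, hc_def]; field_simp
    rw [this]
    exact mul_le_mul_of_nonneg_left key ENNReal.toReal_nonneg

/-- Gluing estimate for uniformly local `H^{−1}` norms on the strip:
`‖f‖_{H^{−1}(Ω_n)} ≤ C n^{1/2} ‖f‖_{H^{−1}_uloc}` with `C` independent of `n`, where
`‖f‖_{H^{−1}_uloc} = sup_k ‖χ_k f‖_{H^{−1}(Ω)}` for cutoffs `χ_k = χ(· − k)` with `Σ_k χ_k = 2`. -/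
theorem uloc_Hneg1_gluing
    (χ : ℝ → ℝ) (hχsmooth : ContDiff ℝ (⊤ : ℕ∞) χ)
    (hχrange : ∀ x, χ x ∈ Set.Icc (0:ℝ) 1)
    (hχone : ∀ x ∈ Set.Icc (0:ℝ) 1, χ x = 1)
    (hχsupp : Function.support χ ⊆ Set.Ioo (-1:ℝ) 2)
    (hχsum : ∀ x : ℝ, (∑' k : ℤ, χ (x - k)) = 2) :
    ∃ C : ℝ, 0 < C ∧ ∀ n : ℕ, 1 ≤ n → ∀ f : ℝ × ℝ → ℝ,
      negH1NormOn (stripTrunc n) f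
        ≤ ENNReal.ofReal (C * Real.sqrt n) *
            ⨆ k : ℤ, negH1NormOn stripSet (fun p => χ (p.1 - k) * f p) := by
  classical
  -- χ vanishes off (-1,2)
  have hχzero : ∀ t : ℝ, (2 ≤ t ∨ t ≤ -1) → χ t = 0 := by
    intro t ht
    by_contra h
    have hmem := hχsupp h
    rcases ht with h2 | h2
    · exact absurd hmem.2 (not_lt.2 h2)
    · exact absurd hmem.1 (not_lt.2 (by linarith))
  -- the wider cutoff η
  set η : ℝ → ℝ := fun t => (1/2) * ∑ j ∈ Finset.Icc (-2:ℤ) 2, χ (t - j) with hη_def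
  have hηsmooth : ContDiff ℝ (⊤ : ℕ∞) η := by
    apply ContDiff.mul contDiff_const
    exact ContDiff.sum fun j _ => hχsmooth.comp (contDiff_id.sub contDiff_const)
  have hηzero : ∀ t : ℝ, t ∉ Set.Icc (-3:ℝ) 4 → η t = 0 := by
    intro t ht
    simp only [Set.mem_Icc, not_and_or, not_le] at ht
    have : ∀ j ∈ Finset.Icc (-2:ℤ) 2, χ (t - j) = 0 := by
      intro j hj
      rw [Finset.mem_Icc] at hj
      have hj1 : (-2:ℝ) ≤ (j:ℝ) := by exact_mod_cast hj.1
      have hj2 : (j:ℝ) ≤ 2 := by exact_mod_cast hj.2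
      rcases ht with h | h
      · exact hχzero _ (Or.inr (by linarith))
      · exact hχzero _ (Or.inl (by linarith))
    rw [hη_def]
    simp only
    rw [Finset.sum_congr rfl this]
    simp
  have hηc : HasCompactSupport η := by
    apply HasCompactSupport.intro (isCompact_Icc (a := (-3:ℝ)) (b := 4))
    exact hηzero
  have hηone : ∀ t ∈ Set.Icc (-1:ℝ) 2, η t = 1 := by
    intro t ht
    have hsum : ∑ j ∈ Finset.Icc (-2:ℤ) 2, χ (t - j) = 2 := by
      rw [← hχsum t]
      refine (tsum_eq_sum ?_).symm
      intro j hj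
      rw [Finset.mem_Icc, not_and_or, not_le, not_le] at hj
      rcases hj with h | h
      · have h' : (j:ℤ) ≤ -3 := by omega
        have : (j:ℝ) ≤ -3 := by exact_mod_cast h'
        exact hχzero _ (Or.inl (by linarith [ht.1]))
      · have h' : (3:ℤ) ≤ j := by omega
        have : (3:ℝ) ≤ (j:ℝ) := by exact_mod_cast h'
        exact hχzero _ (Or.inr (by linarith [ht.2]))
    rw [hη_def]; simp only; rw [hsum]; norm_num
  -- bounds on η and its derivative
  obtain ⟨M₀, hM₀⟩ := hηc.exists_bound_of_continuous hηsmooth.continuous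
  obtain ⟨M₁, hM₁⟩ := (hηc.fderiv (𝕜 := ℝ)).exists_bound_of_continuous
    (hηsmooth.fderiv_right (m := (⊤ : ℕ∞)) (by simp)).continuous
  set M : ℝ := max 1 (max M₀ M₁) with hM_def
  have hM1 : (1:ℝ) ≤ M := le_max_left _ _
  have hMpos : (0:ℝ) < M := lt_of_lt_of_le one_pos hM1
  have hMη : ∀ t, ‖η t‖ ≤ M := fun t => (hM₀ t).trans ((le_max_left _ _).trans (le_max_right _ _))
  have hMη' : ∀ t, ‖fderiv ℝ η t‖ ≤ M :=
    fun t => (hM₁ t).trans ((le_max_right _ _).trans (le_max_right _ _))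
  refine ⟨28 * M, by positivity, ?_⟩
  intro n hn f
  set S := ⨆ k : ℤ, negH1NormOn stripSet (fun p => χ (p.1 - k) * f p) with hS_def
  by_cases hStop : S = ⊤
  · rw [hStop, ENNReal.mul_top]
    · exact le_top
    · have hnpos : (0:ℝ) < Real.sqrt n := Real.sqrt_pos.2 (by exact_mod_cast hn)
      simp only [ne_eq, ENNReal.ofReal_eq_zero, not_le]
      positivity
  -- main case
  have hSne : S ≠ ⊤ := hStop
  apply sSup_le
  rintro r ⟨φ, hφ1, hφ2, hφ3, hφ4, rfl⟩
  -- the index set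
  set K : Finset ℤ := Finset.Icc (-(n:ℤ) - 2) ((n:ℤ) + 1) with hK_def
  -- localized test functions
  set Φ : ℤ → ℝ × ℝ → ℝ := fun k y => η (y.1 - k) * φ y with hΦ_def
  have hθsmooth : ∀ k : ℤ, ContDiff ℝ (⊤ : ℕ∞) (fun y : ℝ × ℝ => η (y.1 - (k:ℝ))) :=
    fun k => hηsmooth.comp (contDiff_fst.sub contDiff_const)
  have hΦsmooth : ∀ k : ℤ, ContDiff ℝ (⊤ : ℕ∞) (Φ k) := fun k => (hθsmooth k).mul hφ1
  have hΦc : ∀ k : ℤ, HasCompactSupport (Φ k) := fun k => hφ2.mul_left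
  have hΦsupp : ∀ k : ℤ, tsupport (Φ k) ⊆ tsupport φ := by
    intro k
    apply closure_mono
    intro x hx
    simp only [Function.mem_support, hΦ_def] at hx ⊢
    exact fun h => hx (by rw [h, mul_zero])
  have hstrip : stripTrunc n ⊆ stripSet := by
    intro x hx
    exact ⟨Set.mem_univ _, hx.2⟩
  -- support of φ gives x.1 ∈ (-n, n)
  have hφx1 : ∀ x : ℝ × ℝ, φ x ≠ 0 → -(n:ℝ) < x.1 ∧ x.1 < n := by
    intro x hx
    have := hφ3 (subset_closure (Function.mem_support.2 hx))
    exact ⟨this.1.1, this.1.2⟩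
  -- per-k estimate
  have hle_S : ∀ k : ℤ, negH1NormOn stripSet (fun p => χ (p.1 - k) * f p) ≤ S := by
    intro k
    rw [hS_def]
    exact le_iSup (fun k : ℤ => negH1NormOn stripSet (fun p => χ (p.1 - k) * f p)) k
  have hSk_fin : ∀ k : ℤ, negH1NormOn stripSet (fun p => χ (p.1 - k) * f p) ≠ ⊤ :=
    fun k => ne_top_of_le_ne_top hSne (hle_S k)
  have hperk : ∀ k : ℤ, ∫ x, (χ (x.1 - k) * f x) * φ x
      ≤ (h1Norm (Φ k)).toReal * S.toReal := by
    intro k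
    have heq : (fun x => (χ (x.1 - k) * f x) * φ x)
        = fun x => (χ (x.1 - k) * f x) * Φ k x := by
      funext x
      by_cases hχx : χ (x.1 - k) = 0
      · simp [hχx]
      · have hmem := hχsupp hχx
        have hone : η (x.1 - k) = 1 := hηone _ ⟨hmem.1.le, hmem.2.le⟩
        simp [hΦ_def, hone]
    have hsub : tsupport (Φ k) ⊆ stripSet := (hΦsupp k).trans (hφ3.trans hstrip)
    have hp := pairing_le (f := fun p => χ (p.1 - k) * f p) (hΦsmooth k) (hΦc k) hsub (hSk_fin k)
    calc ∫ x, (χ (x.1 - k) * f x) * φ x = ∫ x, (χ (x.1 - k) * f x) * Φ k x := by rw [heq]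
      _ ≤ (h1Norm (Φ k)).toReal * (negH1NormOn stripSet (fun p => χ (p.1 - k) * f p)).toReal := hp
      _ ≤ (h1Norm (Φ k)).toReal * S.toReal := by
          apply mul_le_mul_of_nonneg_left _ ENNReal.toReal_nonneg
          exact ENNReal.toReal_mono hSne (hle_S k)
  -- slab machinery
  set G : ℝ × ℝ → ℝ≥0∞ := fun x => (‖φ x‖₊ : ℝ≥0∞) + (‖fderiv ℝ φ x‖₊ : ℝ≥0∞) with hG_def
  set c : ℝ≥0∞ := ENNReal.ofReal M with hc_def
  set q : ℝ × ℝ → ℝ≥0∞ := fun x => (c * G x) ^ 2 with hq_def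
  set Sl : ℤ → Set (ℝ × ℝ) :=
    fun k => (fun y : ℝ × ℝ => y.1) ⁻¹' Set.Icc ((k:ℝ) - 3) ((k:ℝ) + 4) with hSl_def
  have hSl_closed : ∀ k : ℤ, IsClosed (Sl k) := fun k => isClosed_Icc.preimage continuous_fst
  have hSl_meas : ∀ k : ℤ, MeasurableSet (Sl k) := fun k => (hSl_closed k).measurableSet
  have hGm : Measurable G := by
    apply Measurable.add (f := fun x => (‖φ x‖₊ : ℝ≥0∞)) (g := fun x => (‖fderiv ℝ φ x‖₊ : ℝ≥0∞))
    · exact (measurable_nnnorm.comp hφ1.continuous.measurable).coe_nnreal_ennreal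
    · exact (measurable_nnnorm.comp
        ((hφ1.fderiv_right (m := (⊤ : ℕ∞)) (by simp)).continuous.measurable)).coe_nnreal_ennreal
  have hqm : Measurable q := (hGm.const_mul c).pow_const 2
  have hcG : ∀ (x : ℝ × ℝ) (r : ℝ), r ≤ M * (‖φ x‖ + ‖fderiv ℝ φ x‖) →
      ENNReal.ofReal r ≤ c * G x := by
    intro x r hr
    calc ENNReal.ofReal r ≤ ENNReal.ofReal (M * (‖φ x‖ + ‖fderiv ℝ φ x‖)) :=
        ENNReal.ofReal_le_ofReal hr
      _ = c * G x := by
        rw [ENNReal.ofReal_mul hMpos.le, ENNReal.ofReal_add (norm_nonneg _) (norm_nonneg _),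
          ofReal_norm, ofReal_norm, enorm_eq_nnnorm, enorm_eq_nnnorm, hc_def, hG_def]
  have hΦzero : ∀ (k : ℤ) (y : ℝ × ℝ), y ∉ Sl k → Φ k y = 0 := by
    intro k y hy
    have hy1 : y.1 - k ∉ Set.Icc (-3:ℝ) 4 := by
      simp only [hSl_def, Set.mem_preimage, Set.mem_Icc, not_and_or, not_le] at hy ⊢
      rcases hy with h | h
      · left; linarith
      · right; linarith
    rw [hΦ_def]; simp only; rw [hηzero _ hy1, zero_mul]
  have hP1 : ∀ (k : ℤ) (x : ℝ × ℝ), (‖Φ k x‖₊ : ℝ≥0∞) ^ 2 ≤ (Sl k).indicator q x := by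
    intro k x
    by_cases hx : x ∈ Sl k
    · rw [Set.indicator_of_mem hx, hq_def]
      apply pow_le_pow_left' _ 2
      rw [← enorm_eq_nnnorm, ← ofReal_norm]
      apply hcG
      have h1 : ‖Φ k x‖ = ‖η (x.1 - k)‖ * ‖φ x‖ := by rw [hΦ_def]; exact norm_mul _ _
      rw [h1]
      calc ‖η (x.1 - k)‖ * ‖φ x‖ ≤ M * ‖φ x‖ :=
          mul_le_mul_of_nonneg_right (hMη _) (norm_nonneg _)
        _ ≤ M * (‖φ x‖ + ‖fderiv ℝ φ x‖) := by
            nlinarith [norm_nonneg (fderiv ℝ φ x), hMpos]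
    · rw [Set.indicator_of_notMem hx]
      simp [hΦzero k x hx]
  have hθdiff : ∀ (k : ℤ) (x : ℝ × ℝ),
      DifferentiableAt ℝ (fun y : ℝ × ℝ => η (y.1 - (k:ℝ))) x :=
    fun k x => ((hθsmooth k).differentiable (by simp)) x
  have hθfder : ∀ (k : ℤ) (x : ℝ × ℝ),
      ‖fderiv ℝ (fun y : ℝ × ℝ => η (y.1 - (k:ℝ))) x‖ ≤ M := by
    intro k x
    have hg : HasFDerivAt (fun y : ℝ × ℝ => y.1 - (k:ℝ)) (ContinuousLinearMap.fst ℝ ℝ ℝ) x :=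
      hasFDerivAt_fst.sub_const _
    have hηd : HasFDerivAt η (fderiv ℝ η (x.1 - k)) (x.1 - k) :=
      (hηsmooth.differentiable (by simp) (x.1 - k)).hasFDerivAt
    have hcomp : HasFDerivAt (fun y : ℝ × ℝ => η (y.1 - (k:ℝ)))
        ((fderiv ℝ η (x.1 - k)).comp (ContinuousLinearMap.fst ℝ ℝ ℝ)) x := HasFDerivAt.comp x (g := η) (f := fun y : ℝ × ℝ => y.1 - (k:ℝ)) hηd hg
    rw [hcomp.fderiv]
    calc ‖(fderiv ℝ η (x.1 - k)).comp (ContinuousLinearMap.fst ℝ ℝ ℝ)‖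
        ≤ ‖fderiv ℝ η (x.1 - k)‖ * ‖ContinuousLinearMap.fst ℝ ℝ ℝ‖ :=
          ContinuousLinearMap.opNorm_comp_le _ _
      _ ≤ M * 1 :=
          mul_le_mul (hMη' _) (ContinuousLinearMap.norm_fst_le ℝ ℝ ℝ) (norm_nonneg _) hMpos.le
      _ = M := mul_one M
  have hP2 : ∀ (k : ℤ) (x : ℝ × ℝ),
      (‖fderiv ℝ (Φ k) x‖₊ : ℝ≥0∞) ^ 2 ≤ (Sl k).indicator q x := by
    intro k x
    by_cases hx : x ∈ Sl k
    · rw [Set.indicator_of_mem hx, hq_def]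
      apply pow_le_pow_left' _ 2
      rw [← enorm_eq_nnnorm, ← ofReal_norm]
      apply hcG
      have hfd : fderiv ℝ (Φ k) x = η (x.1 - k) • fderiv ℝ φ x
          + φ x • fderiv ℝ (fun y : ℝ × ℝ => η (y.1 - (k:ℝ))) x := by
        rw [hΦ_def]
        exact fderiv_mul (hθdiff k x) (hφ1.differentiable (by simp) x)
      rw [hfd]
      calc ‖η (x.1 - k) • fderiv ℝ φ x + φ x • fderiv ℝ (fun y : ℝ × ℝ => η (y.1 - (k:ℝ))) x‖
          ≤ ‖η (x.1 - k) • fderiv ℝ φ x‖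
            + ‖φ x • fderiv ℝ (fun y : ℝ × ℝ => η (y.1 - (k:ℝ))) x‖ := norm_add_le _ _
        _ = ‖η (x.1 - k)‖ * ‖fderiv ℝ φ x‖
            + ‖φ x‖ * ‖fderiv ℝ (fun y : ℝ × ℝ => η (y.1 - (k:ℝ))) x‖ := by
            rw [norm_smul, norm_smul]
        _ ≤ M * ‖fderiv ℝ φ x‖ + ‖φ x‖ * M :=
            add_le_add (mul_le_mul_of_nonneg_right (hMη _) (norm_nonneg _))
              (mul_le_mul_of_nonneg_left (hθfder k x) (norm_nonneg _))
        _ = M * (‖φ x‖ + ‖fderiv ℝ φ x‖) := by ring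
    · rw [Set.indicator_of_notMem hx]
      have hev : Φ k =ᶠ[nhds x] (fun _ => (0:ℝ)) :=
        Filter.eventuallyEq_of_mem ((hSl_closed k).isOpen_compl.mem_nhds hx) (hΦzero k)
      rw [hev.fderiv_eq]
      simp
  have hE1 : ∀ k : ℤ, eLpNorm (Φ k) 2 volume ^ 2 ≤ ∫⁻ x, (Sl k).indicator q x := by
    intro k; rw [sq_eLpNorm_two]; exact lintegral_mono (hP1 k)
  have hE2 : ∀ k : ℤ, eLpNorm (fun x => fderiv ℝ (Φ k) x) 2 volume ^ 2
      ≤ ∫⁻ x, (Sl k).indicator q x := by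
    intro k; rw [sq_eLpNorm_two]; exact lintegral_mono (hP2 k)
  have hAk : ∀ k : ℤ, h1Norm (Φ k) ^ 2 ≤ 8 * ∫⁻ x, (Sl k).indicator q x := by
    intro k
    calc h1Norm (Φ k) ^ 2
        ≤ 4 * (eLpNorm (Φ k) 2 volume ^ 2
            + eLpNorm (fun x => fderiv ℝ (Φ k) x) 2 volume ^ 2) := ennreal_add_sq_le _ _
      _ ≤ 4 * ((∫⁻ x, (Sl k).indicator q x) + ∫⁻ x, (Sl k).indicator q x) :=
          mul_le_mul' le_rfl (add_le_add (hE1 k) (hE2 k))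
      _ = 8 * ∫⁻ x, (Sl k).indicator q x := by ring
  -- overlap bound
  have hoverlap : ∀ x : ℝ × ℝ, (∑ k ∈ K, (Sl k).indicator q x) ≤ 8 * q x := by
    intro x
    have heq : ∑ k ∈ K, (Sl k).indicator q x
        = ∑ k ∈ K.filter (fun k => x ∈ Sl k), q x := by
      rw [Finset.sum_filter]
      exact Finset.sum_congr rfl (fun k _ => Set.indicator_apply _ _ _)
    rw [heq, Finset.sum_const, nsmul_eq_mul]
    have hcard : (K.filter (fun k => x ∈ Sl k)).card ≤ 8 := by
      have hsub : K.filter (fun k => x ∈ Sl k) ⊆ Finset.Icc (⌈x.1⌉ - 4) (⌈x.1⌉ + 3) := by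
        intro k hk
        have hmem := (Finset.mem_filter.1 hk).2
        simp only [hSl_def, Set.mem_preimage, Set.mem_Icc] at hmem
        rw [Finset.mem_Icc]
        constructor
        · have h1 : x.1 ≤ (k:ℝ) + 4 := hmem.2
          have h2 : ⌈x.1⌉ ≤ k + 4 := by
            apply Int.ceil_le.2
            push_cast
            linarith
          omega
        · have h1 : (k:ℝ) - 3 ≤ x.1 := hmem.1
          have h2 : ((k - 3 : ℤ) : ℝ) ≤ (⌈x.1⌉ : ℝ) := by
            push_cast
            linarith [Int.le_ceil x.1]
          have := Int.cast_le.1 h2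
          omega
      calc (K.filter (fun k => x ∈ Sl k)).card
          ≤ (Finset.Icc (⌈x.1⌉ - 4) (⌈x.1⌉ + 3)).card := Finset.card_le_card hsub
        _ = 8 := by rw [Int.card_Icc]; omega
    apply mul_le_mul' _ le_rfl
    exact_mod_cast hcard
  have hsumL : ∑ k ∈ K, ∫⁻ x, (Sl k).indicator q x ≤ 8 * ∫⁻ x, q x := by
    rw [← lintegral_finset_sum K (fun k _ => (hqm.indicator (hSl_meas k)))]
    calc ∫⁻ x, ∑ k ∈ K, (Sl k).indicator q x ≤ ∫⁻ x, 8 * q x := lintegral_mono hoverlap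
      _ = 8 * ∫⁻ x, q x := lintegral_const_mul 8 hqm
  -- bound on the full integral of q
  have hele1 : eLpNorm φ 2 volume ≤ 1 := le_trans le_self_add hφ4
  have hele2 : eLpNorm (fun x => fderiv ℝ φ x) 2 volume ≤ 1 := le_trans le_add_self hφ4
  have hq_int : ∫⁻ x, q x ≤ 8 * c ^ 2 := by
    have hpt : ∀ x : ℝ × ℝ, q x
        ≤ c ^ 2 * (4 * ((‖φ x‖₊ : ℝ≥0∞) ^ 2 + (‖fderiv ℝ φ x‖₊ : ℝ≥0∞) ^ 2)) := by
      intro x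
      rw [hq_def]
      simp only
      rw [mul_pow]
      exact mul_le_mul' le_rfl (ennreal_add_sq_le _ _)
    have hm1 : Measurable (fun x : ℝ × ℝ => ((‖φ x‖₊ : ℝ≥0∞)) ^ 2) :=
      ((measurable_nnnorm.comp hφ1.continuous.measurable).coe_nnreal_ennreal).pow_const 2
    have hm2 : Measurable (fun x : ℝ × ℝ => ((‖fderiv ℝ φ x‖₊ : ℝ≥0∞)) ^ 2) :=
      ((measurable_nnnorm.comp
        ((hφ1.fderiv_right (m := (⊤ : ℕ∞)) (by simp)).continuous.measurable)).coe_nnreal_ennreal).pow_const 2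
    have hm12 : Measurable fun x : ℝ × ℝ =>
        (‖φ x‖₊ : ℝ≥0∞) ^ 2 + (‖fderiv ℝ φ x‖₊ : ℝ≥0∞) ^ 2 := hm1.add hm2
    calc ∫⁻ x, q x
        ≤ ∫⁻ x, c ^ 2 * (4 * ((‖φ x‖₊ : ℝ≥0∞) ^ 2 + (‖fderiv ℝ φ x‖₊ : ℝ≥0∞) ^ 2)) :=
          lintegral_mono hpt
      _ = c ^ 2 * (4 * ((∫⁻ x, (‖φ x‖₊ : ℝ≥0∞) ^ 2) + ∫⁻ x, (‖fderiv ℝ φ x‖₊ : ℝ≥0∞) ^ 2)) := by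
          rw [lintegral_const_mul _ (hm12.const_mul 4),
            lintegral_const_mul _ hm12, lintegral_add_left hm1]
      _ ≤ c ^ 2 * (4 * (1 + 1)) := by
          apply mul_le_mul' le_rfl
          apply mul_le_mul' le_rfl
          apply add_le_add
          · rw [← sq_eLpNorm_two]
            exact pow_le_one' hele1 2
          · rw [← sq_eLpNorm_two]
            exact pow_le_one' hele2 2
      _ = 8 * c ^ 2 := by ring
  -- total sum of squares
  have hsum_sq : ∑ k ∈ K, h1Norm (Φ k) ^ 2 ≤ ENNReal.ofReal (512 * M ^ 2) := by
    calc ∑ k ∈ K, h1Norm (Φ k) ^ 2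
        ≤ ∑ k ∈ K, 8 * ∫⁻ x, (Sl k).indicator q x := Finset.sum_le_sum (fun k _ => hAk k)
      _ = 8 * ∑ k ∈ K, ∫⁻ x, (Sl k).indicator q x := by rw [Finset.mul_sum]
      _ ≤ 8 * (8 * ∫⁻ x, q x) := mul_le_mul' le_rfl hsumL
      _ ≤ 8 * (8 * (8 * c ^ 2)) := mul_le_mul' le_rfl (mul_le_mul' le_rfl hq_int)
      _ = 512 * c ^ 2 := by ring
      _ = ENNReal.ofReal (512 * M ^ 2) := by
          rw [ENNReal.ofReal_mul (by norm_num), ENNReal.ofReal_pow hMpos.le, hc_def]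
          norm_num
  -- to the real numbers
  set a : ℤ → ℝ := fun k => (h1Norm (Φ k)).toReal with ha_def
  have ha_nonneg : ∀ k : ℤ, 0 ≤ a k := fun k => ENNReal.toReal_nonneg
  have hfinΦ : ∀ k : ℤ, h1Norm (Φ k) ≠ ⊤ := fun k => (h1Norm_lt_top (hΦsmooth k) (hΦc k)).ne
  have hsq_real : ∑ k ∈ K, a k ^ 2 ≤ 512 * M ^ 2 := by
    have heq : (∑ k ∈ K, h1Norm (Φ k) ^ 2).toReal = ∑ k ∈ K, a k ^ 2 := by
      rw [ENNReal.toReal_sum (fun k _ => ENNReal.pow_ne_top (hfinΦ k))]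
      exact Finset.sum_congr rfl (fun k _ => ENNReal.toReal_pow _ _)
    have h := ENNReal.toReal_mono ENNReal.ofReal_ne_top hsum_sq
    rw [heq, ENNReal.toReal_ofReal (by positivity)] at h
    exact h
  -- Cauchy-Schwarz
  have hcardK : (K.card : ℝ) ≤ 6 * n := by
    have hc8 : K.card = 2 * n + 4 := by
      rw [hK_def, Int.card_Icc]
      omega
    rw [hc8]
    push_cast
    have h1n : (1:ℝ) ≤ n := by exact_mod_cast hn
    linarith
  set T : ℝ := ∑ k ∈ K, a k with hT_def
  have hT0 : 0 ≤ T := Finset.sum_nonneg (fun k _ => ha_nonneg k)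
  have hT2 : T ^ 2 ≤ 6 * n * (512 * M ^ 2) := by
    have hcs := Finset.sum_mul_sq_le_sq_mul_sq K (fun _ => (1:ℝ)) a
    simp only [one_mul, one_pow] at hcs
    rw [Finset.sum_const, nsmul_eq_mul, mul_one] at hcs
    calc T ^ 2 ≤ (K.card : ℝ) * ∑ k ∈ K, a k ^ 2 := hcs
      _ ≤ (6 * n) * (512 * M ^ 2) := by
          apply mul_le_mul hcardK hsq_real (Finset.sum_nonneg (fun k _ => sq_nonneg _))
          positivity
  have hT : T ≤ 56 * M * Real.sqrt n := by
    have hy : (0:ℝ) ≤ 56 * M * Real.sqrt n := by positivity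
    have hsq : T ^ 2 ≤ (56 * M * Real.sqrt n) ^ 2 := by
      have hsqr : Real.sqrt n ^ 2 = (n:ℝ) := Real.sq_sqrt (Nat.cast_nonneg n)
      calc T ^ 2 ≤ 6 * n * (512 * M ^ 2) := hT2
        _ ≤ (56 * M * Real.sqrt n) ^ 2 := by
            rw [mul_pow, mul_pow, hsqr]
            nlinarith [sq_nonneg M, Nat.cast_nonneg (α := ℝ) n]
    calc T = Real.sqrt (T ^ 2) := (Real.sqrt_sq hT0).symm
      _ ≤ Real.sqrt ((56 * M * Real.sqrt n) ^ 2) := Real.sqrt_le_sqrt hsq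
      _ = 56 * M * Real.sqrt n := Real.sqrt_sq hy
  -- final real estimate
  have hSreal0 : (0:ℝ) ≤ S.toReal := ENNReal.toReal_nonneg
  have hfin_int : ∫ x, f x * φ x ≤ 28 * M * Real.sqrt n * S.toReal := by
    by_cases hInt : Integrable (fun x => f x * φ x) volume
    · have hsum_eq : ∀ x : ℝ × ℝ, ∑ k ∈ K, (χ (x.1 - k) * f x) * φ x = 2 * (f x * φ x) := by
        intro x
        by_cases hφx : φ x = 0
        · simp [hφx]
        · have hx1 := hφx1 x hφx
          have hsum2 : ∑ k ∈ K, χ (x.1 - k) = 2 := by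
            rw [← hχsum x.1]
            refine (tsum_eq_sum ?_).symm
            intro k hk
            rw [hK_def, Finset.mem_Icc, not_and_or, not_le, not_le] at hk
            rcases hk with h | h
            · have h' : k ≤ -(n:ℤ) - 3 := by omega
              have : (k:ℝ) ≤ -(n:ℝ) - 3 := by exact_mod_cast h'
              exact hχzero _ (Or.inl (by linarith [hx1.1]))
            · have h' : (n:ℤ) + 2 ≤ k := by omega
              have : (n:ℝ) + 2 ≤ (k:ℝ) := by exact_mod_cast h'
              exact hχzero _ (Or.inr (by linarith [hx1.2]))
          calc ∑ k ∈ K, (χ (x.1 - k) * f x) * φ x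
              = (∑ k ∈ K, χ (x.1 - k)) * (f x * φ x) := by
                rw [Finset.sum_mul]
                exact Finset.sum_congr rfl (fun k _ => by ring)
            _ = 2 * (f x * φ x) := by rw [hsum2]
      have hterm : ∀ k : ℤ, Integrable (fun x => (χ (x.1 - k) * f x) * φ x) volume := by
        intro k
        have heq2 : (fun x : ℝ × ℝ => (χ (x.1 - k) * f x) * φ x)
            = fun x => χ (x.1 - k) * (f x * φ x) := by
          funext x; ring
        rw [heq2]
        apply hInt.bdd_mul (c := 1)
        · exact (hχsmooth.continuous.comp (continuous_fst.sub continuous_const)).aestronglyMeasurable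
        · refine Filter.Eventually.of_forall (fun x => ?_)
          rw [Real.norm_eq_abs, abs_le]
          exact ⟨by linarith [(hχrange (x.1 - k)).1], (hχrange (x.1 - k)).2⟩
      have h2int : 2 * ∫ x, f x * φ x = ∑ k ∈ K, ∫ x, (χ (x.1 - k) * f x) * φ x := by
        rw [← integral_finset_sum K (fun k _ => hterm k), ← integral_const_mul]
        congr 1
        funext x
        rw [← hsum_eq x]
      have hsum_le : ∑ k ∈ K, ∫ x, (χ (x.1 - k) * f x) * φ x ≤ T * S.toReal := by
        rw [hT_def, Finset.sum_mul]
        exact Finset.sum_le_sum (fun k _ => hperk k)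
      have hfin2 : 2 * ∫ x, f x * φ x ≤ 56 * M * Real.sqrt n * S.toReal := by
        rw [h2int]
        exact hsum_le.trans (mul_le_mul_of_nonneg_right hT hSreal0)
      linarith
    · rw [integral_undef hInt]
      have : (0:ℝ) ≤ 28 * M * Real.sqrt n := by positivity
      exact mul_nonneg this hSreal0
  -- conclude in ℝ≥0∞
  calc ENNReal.ofReal (∫ x, f x * φ x)
      ≤ ENNReal.ofReal (28 * M * Real.sqrt n * S.toReal) := ENNReal.ofReal_le_ofReal hfin_int
    _ = ENNReal.ofReal (28 * M * Real.sqrt n) * ENNReal.ofReal S.toReal := by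
        rw [← ENNReal.ofReal_mul (by positivity)]
    _ ≤ ENNReal.ofReal (28 * M * Real.sqrt n) * S :=
        mul_le_mul' le_rfl ENNReal.ofReal_toReal_le
end
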